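/- arXiv:math/0505693 — 2 statements merged into one kernel-verified Lean document; each statement's English description precedes it below -/
import Mathlib

section
/- The derivative of Θ(·;q) at z = 1 equals −∏_{n=1}^∞ (1-q^n)^3, i.e. d/dx Θ(x;q)|_{x=1} = −∏_{n≥1}(1-q^n)^3. -/
/-!
Writing `Θ(z) = (1 - z) F(z)`, we get `Θ'(1) = -F(1) = -∏ (1 - qⁿ)³` as soon as `F` is continuous
at `1`. For continuity, `F(z) = G(1) G(z) G(z⁻¹)` with `G(w) = ∏ (1 - w qⁿ)`, and `G` is entire,
being a locally uniformly convergent product of entire functions.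
-/

open Complex

/-- The theta function `Θ(z;q) = (1-z)·∏_{n≥1}(1-q^n)(1-z q^n)(1-z⁻¹ q^n)`. -/
noncomputable def Theta (q : ℝ) (z : ℂ) : ℂ :=
  (1 - z) * ∏' n : ℕ,
    ((1 - (q : ℂ) ^ (n + 1)) * (1 - z * (q : ℂ) ^ (n + 1)) * (1 - z⁻¹ * (q : ℂ) ^ (n + 1)))

theorem hasDerivAt_sub_smul_of_continuousAt {𝕜 E : Type*} [NontriviallyNormedField 𝕜]
    [NormedAddCommGroup E] [NormedSpace 𝕜 E] {g : 𝕜 → E} {a : 𝕜} (hg : ContinuousAt g a) :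
    HasDerivAt (fun x ↦ (x - a) • g x) (g a) a := by
  rw [hasDerivAt_iff_tendsto_slope]
  refine (hg.tendsto.mono_left nhdsWithin_le_nhds).congr' ?_
  filter_upwards [self_mem_nhdsWithin] with x hx
  rw [slope_def_module, sub_self, zero_smul, sub_zero, smul_smul,
    inv_mul_cancel₀ (sub_ne_zero.2 hx), one_smul]

section

variable {q : ℂ}

theorem multipliable_one_sub_mul_pow (w : ℂ) (hq : ‖q‖ < 1) :
    Multipliable fun n : ℕ ↦ 1 - w * q ^ (n + 1) := by
  simp_rw [sub_eq_add_neg]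
  refine multipliable_one_add_of_summable ?_
  simpa [pow_succ', mul_assoc] using
    (summable_geometric_of_lt_one (norm_nonneg q) hq).mul_left (‖w‖ * ‖q‖)

theorem hasProdLocallyUniformlyOn_one_sub_mul_pow (hq : ‖q‖ < 1) :
    HasProdLocallyUniformlyOn (fun n w ↦ 1 - w * q ^ (n + 1))
      (fun w ↦ ∏' n : ℕ, (1 - w * q ^ (n + 1))) Set.univ := by
  simp_rw [sub_eq_add_neg]
  refine hasProdLocallyUniformlyOn_of_forall_compact isOpen_univ fun K _ hK ↦ ?_
  obtain ⟨R, hR⟩ := hK.isBounded.exists_norm_le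
  refine ((summable_geometric_of_lt_one (norm_nonneg q) hq).mul_left (R * ‖q‖)
    ).hasProdUniformlyOn_nat_one_add hK (.of_forall fun n w hw ↦ ?_) fun _ ↦ by fun_prop
  rw [norm_neg, norm_mul, norm_pow, pow_succ, mul_comm (‖q‖ ^ n), ← mul_assoc]
  gcongr
  exact hR w hw

theorem differentiable_tprod_one_sub_mul_pow (hq : ‖q‖ < 1) :
    Differentiable ℂ fun w ↦ ∏' n : ℕ, (1 - w * q ^ (n + 1)) := by
  rw [← differentiableOn_univ]
  exact (hasProdLocallyUniformlyOn_one_sub_mul_pow hq).differentiableOn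
    (.of_forall fun _ ↦ by simpa [Finset.prod_fn] using
      DifferentiableOn.finsetProd (fun _ _ ↦ by fun_prop)) isOpen_univ

end

theorem continuousAt_tprod_theta_factor {q z : ℂ} (hq : ‖q‖ < 1) (hz : z ≠ 0) :
    ContinuousAt (fun w ↦ ∏' n : ℕ,
      ((1 - q ^ (n + 1)) * (1 - w * q ^ (n + 1)) * (1 - w⁻¹ * q ^ (n + 1)))) z := by
  have hG := (differentiable_tprod_one_sub_mul_pow hq).continuous
  have hP : Multipliable fun n : ℕ ↦ 1 - q ^ (n + 1) := by
    simpa using multipliable_one_sub_mul_pow 1 hq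
  have hsplit : (fun w ↦ ∏' n : ℕ,
      ((1 - q ^ (n + 1)) * (1 - w * q ^ (n + 1)) * (1 - w⁻¹ * q ^ (n + 1)))) =
      fun w ↦ (∏' n : ℕ, (1 - q ^ (n + 1))) * (∏' n : ℕ, (1 - w * q ^ (n + 1))) *
        ∏' n : ℕ, (1 - w⁻¹ * q ^ (n + 1)) := by
    funext w
    rw [(hP.mul (multipliable_one_sub_mul_pow w hq)).tprod_mul
      (multipliable_one_sub_mul_pow w⁻¹ hq), hP.tprod_mul (multipliable_one_sub_mul_pow w hq)]
  rw [hsplit]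
  exact (continuousAt_const.mul hG.continuousAt).mul (hG.continuousAt.comp (continuousAt_inv₀ hz))

theorem theta_deriv_at_one (q : ℝ) (hq0 : 0 < q) (hq1 : q < 1) :
    deriv (Theta q) 1 = -∏' n : ℕ, (1 - (q : ℂ) ^ (n + 1)) ^ 3 := by
  have hq : ‖(q : ℂ)‖ < 1 := by rwa [norm_real, Real.norm_of_nonneg hq0.le]
  have hTheta : Theta q = fun z ↦ -((z - 1) • ∏' n : ℕ, ((1 - (q : ℂ) ^ (n + 1)) *
      (1 - z * (q : ℂ) ^ (n + 1)) * (1 - z⁻¹ * (q : ℂ) ^ (n + 1)))) := by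
    funext z
    rw [Theta, smul_eq_mul, ← neg_mul, neg_sub]
  rw [hTheta, (hasDerivAt_sub_smul_of_continuousAt
    (continuousAt_tprod_theta_factor hq one_ne_zero)).fun_neg.deriv]
  simp only [one_mul, inv_one, pow_three, mul_assoc]
end

section
/- Fix 0 < q < 1 and ε > 0, and let (c_m)_{m∈ℤ} satisfy |c_m| ≤ e^{-ε m²}. Then for every integer k, the function z ↦ ∑_{m∈ℤ} c_m/(z−q^m) is bounded on the circle |z| = q^{k+1/2} uniformly in k, and its supremum over that circle tends to 0 as k → −∞. -/
/-!
On the circle `|z| = q^(k+1/2)` every pole `q^m` is at least a factor `√q` away in modulus, so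
`|z - q^m| ≥ (1 - √q) · max(q^m, |z|)`. Bounding by `q^m` alone gives a majorant
`e^(-εm²) q^(-m)` independent of `k` and summable thanks to the Gaussian decay; bounding by `|z|`
makes each term tend to `0` as `|z| → ∞`, i.e. as `k → -∞`, and dominated convergence of
series finishes the proof.
-/

open Real Filter Topology

theorem one_sub_rpow_mul_max_le_abs_rpow_sub_rpow {q d x y : ℝ} (hq0 : 0 < q) (hq1 : q < 1)
    (hd : d ≤ |x - y|) : (1 - q ^ d) * max (q ^ x) (q ^ y) ≤ |q ^ x - q ^ y| := by
  wlog hxy : x ≤ y generalizing x y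
  · rw [max_comm, abs_sub_comm]
    exact this (by rwa [abs_sub_comm]) (le_of_not_ge hxy)
  have hgap : d ≤ y - x := by rwa [abs_sub_comm, abs_of_nonneg (sub_nonneg.2 hxy)] at hd
  have hyx : q ^ y ≤ q ^ x * q ^ d := by
    rw [← rpow_add hq0]
    exact rpow_le_rpow_of_exponent_ge hq0 hq1.le (by linarith)
  have hmono : q ^ y ≤ q ^ x := rpow_le_rpow_of_exponent_ge hq0 hq1.le hxy
  rw [max_eq_left hmono, abs_of_nonneg (sub_nonneg.2 hmono)]
  linarith

theorem half_le_abs_intCast_sub_add_half (m k : ℤ) : 1 / 2 ≤ |(m : ℝ) - (k + 1 / 2)| := by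
  rcases le_or_gt m k with h | h
  · have : (m : ℝ) ≤ k := by exact_mod_cast h
    rw [abs_of_neg (by linarith)]
    linarith
  · have : (k : ℝ) + 1 ≤ m := by exact_mod_cast h
    rw [abs_of_pos (by linarith)]
    linarith

theorem one_sub_rpow_half_mul_max_le_norm_sub_zpow {q : ℝ} (hq0 : 0 < q) (hq1 : q < 1) {k : ℤ}
    {z : ℂ} (hz : ‖z‖ = q ^ ((k : ℝ) + 1 / 2)) (m : ℤ) :
    (1 - q ^ (1 / 2 : ℝ)) * max (q ^ (m : ℝ)) ‖z‖ ≤ ‖z - (q : ℂ) ^ m‖ := by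
  have hnorm : ‖(q : ℂ) ^ m‖ = q ^ (m : ℝ) := by
    rw [norm_zpow, Complex.norm_of_nonneg hq0.le, rpow_intCast]
  calc (1 - q ^ (1 / 2 : ℝ)) * max (q ^ (m : ℝ)) ‖z‖ ≤ |q ^ (m : ℝ) - ‖z‖| := by
        rw [hz]
        exact one_sub_rpow_mul_max_le_abs_rpow_sub_rpow hq0 hq1
          (half_le_abs_intCast_sub_add_half m k)
    _ = |‖z‖ - ‖(q : ℂ) ^ m‖| := by rw [hnorm, abs_sub_comm]
    _ ≤ ‖z - (q : ℂ) ^ m‖ := abs_norm_sub_norm_le _ _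

theorem summable_exp_neg_mul_sq_div_rpow {q ε : ℝ} (hq0 : 0 < q) (hε : 0 < ε) :
    Summable fun m : ℤ => exp (-ε * m ^ 2) / q ^ (m : ℝ) := by
  have hθ := ((summable_jacobiTheta₂_term_iff (((log q / (2 * π) : ℝ) : ℂ) * Complex.I)
    (((ε / π : ℝ) : ℂ) * Complex.I)).2 (by simpa using div_pos hε pi_pos)).norm
  refine hθ.congr fun m => ?_
  rw [norm_jacobiTheta₂_term, Complex.mul_I_im, Complex.mul_I_im, Complex.ofReal_re,
    Complex.ofReal_re, rpow_def_of_pos hq0, ← exp_sub]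
  congr 1
  field_simp

theorem one_sub_rpow_half_pos {q : ℝ} (hq0 : 0 < q) (hq1 : q < 1) : 0 < 1 - q ^ (1 / 2 : ℝ) :=
  sub_pos.2 (rpow_lt_one hq0.le hq1 (by norm_num))

noncomputable def poleTermBound (q ε R : ℝ) (m : ℤ) : ℝ :=
  exp (-ε * m ^ 2) / ((1 - q ^ (1 / 2 : ℝ)) * max (q ^ (m : ℝ)) R)

section poleTermBound

variable {q ε : ℝ}

theorem poleTermBound_nonneg (hq0 : 0 < q) (hq1 : q < 1) (R : ℝ) (m : ℤ) :
    0 ≤ poleTermBound q ε R m :=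
  div_nonneg (exp_pos _).le <| mul_nonneg (one_sub_rpow_half_pos hq0 hq1).le <|
    (rpow_pos_of_pos hq0 _).le.trans (le_max_left _ _)

theorem poleTermBound_le_of_le (hq0 : 0 < q) (hq1 : q < 1) {R R' : ℝ} (h : R ≤ R') (m : ℤ) :
    poleTermBound q ε R' m ≤ poleTermBound q ε R m :=
  div_le_div_of_nonneg_left (exp_pos _).le
    (mul_pos (one_sub_rpow_half_pos hq0 hq1) ((rpow_pos_of_pos hq0 _).trans_le (le_max_left _ _)))
    (mul_le_mul_of_nonneg_left (max_le_max_left _ h) (one_sub_rpow_half_pos hq0 hq1).le)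

theorem summable_poleTermBound (hq0 : 0 < q) (hq1 : q < 1) (hε : 0 < ε) {R : ℝ} (hR : 0 ≤ R) :
    Summable (poleTermBound q ε R) := by
  have hzero : Summable (poleTermBound q ε 0) := by
    refine ((summable_exp_neg_mul_sq_div_rpow hq0 hε).div_const (1 - q ^ (1 / 2 : ℝ))).congr
      fun m => ?_
    rw [poleTermBound, max_eq_left (rpow_pos_of_pos hq0 _).le, div_div,
      mul_comm (1 - q ^ (1 / 2 : ℝ))]
  exact hzero.of_nonneg_of_le (poleTermBound_nonneg hq0 hq1 R)
    (poleTermBound_le_of_le hq0 hq1 hR)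

theorem tendsto_poleTermBound_atTop (hq0 : 0 < q) (hq1 : q < 1) (m : ℤ) :
    Tendsto (fun R => poleTermBound q ε R m) atTop (𝓝 0) :=
  tendsto_const_nhds.div_atTop <| Tendsto.const_mul_atTop (one_sub_rpow_half_pos hq0 hq1) <|
    tendsto_atTop_mono (le_max_right _) tendsto_id

theorem tendsto_tsum_poleTermBound_atTop (hq0 : 0 < q) (hq1 : q < 1) (hε : 0 < ε) :
    Tendsto (fun R => ∑' m, poleTermBound q ε R m) atTop (𝓝 0) := by
  simpa using tendsto_tsum_of_dominated_convergence (summable_poleTermBound hq0 hq1 hε le_rfl)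
    (tendsto_poleTermBound_atTop hq0 hq1) <| eventually_ge_atTop 0 |>.mono fun R hR m => by
      rw [norm_of_nonneg (poleTermBound_nonneg hq0 hq1 R m)]
      exact poleTermBound_le_of_le hq0 hq1 hR m

theorem norm_div_sub_zpow_le_poleTermBound (hq0 : 0 < q) (hq1 : q < 1) {c : ℤ → ℂ}
    (hc : ∀ m : ℤ, ‖c m‖ ≤ exp (-ε * m ^ 2))
    {k : ℤ} {z : ℂ} (hz : ‖z‖ = q ^ ((k : ℝ) + 1 / 2)) (m : ℤ) :
    ‖c m / (z - (q : ℂ) ^ m)‖ ≤ poleTermBound q ε ‖z‖ m := by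
  rw [norm_div]
  exact div_le_div₀ (exp_pos _).le (hc m)
    (mul_pos (one_sub_rpow_half_pos hq0 hq1) ((rpow_pos_of_pos hq0 _).trans_le (le_max_left _ _)))
    (one_sub_rpow_half_mul_max_le_norm_sub_zpow hq0 hq1 hz m)

end poleTermBound

theorem interpolant_bounds (q : ℝ) (hq0 : 0 < q) (hq1 : q < 1) (ε : ℝ) (hε : 0 < ε)
    (c : ℤ → ℂ) (hc : ∀ m : ℤ, ‖c m‖ ≤ Real.exp (-ε * m ^ 2)) :
    (∀ k : ℤ, ∀ z : ℂ, ‖z‖ = q ^ ((k : ℝ) + 1 / 2) →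
        Summable fun m : ℤ => c m / (z - (q : ℂ) ^ m)) ∧
    (∃ B : ℝ, ∀ k : ℤ, ∀ z : ℂ, ‖z‖ = q ^ ((k : ℝ) + 1 / 2) →
        ‖∑' m : ℤ, c m / (z - (q : ℂ) ^ m)‖ ≤ B) ∧
    (∀ δ > 0, ∃ K : ℤ, ∀ k : ℤ, k ≤ K → ∀ z : ℂ,
        ‖z‖ = q ^ ((k : ℝ) + 1 / 2) →
        ‖∑' m : ℤ, c m / (z - (q : ℂ) ^ m)‖ ≤ δ) := by
  have hterm (k : ℤ) (z : ℂ) (hz : ‖z‖ = q ^ ((k : ℝ) + 1 / 2)) :=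
    norm_div_sub_zpow_le_poleTermBound hq0 hq1 hc hz
  have hsummable (z : ℂ) := summable_poleTermBound hq0 hq1 hε (norm_nonneg z)
  have hnorm_tsum (k : ℤ) (z : ℂ) (hz : ‖z‖ = q ^ ((k : ℝ) + 1 / 2)) :
      ‖∑' m : ℤ, c m / (z - (q : ℂ) ^ m)‖ ≤ ∑' m, poleTermBound q ε ‖z‖ m :=
    tsum_of_norm_bounded (hsummable z).hasSum (hterm k z hz)
  refine ⟨fun k z hz => (hsummable z).of_norm_bounded (hterm k z hz),
    ⟨∑' m, poleTermBound q ε 0 m, fun k z hz => (hnorm_tsum k z hz).trans <|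
      (hsummable z).tsum_le_tsum (poleTermBound_le_of_le hq0 hq1 (norm_nonneg z))
        (summable_poleTermBound hq0 hq1 hε le_rfl)⟩, fun δ hδ => ?_⟩
  have hradius : Tendsto (fun k : ℤ => q ^ ((k : ℝ) + 1 / 2)) atBot atTop :=
    (tendsto_rpow_atBot_of_base_lt_one q hq0 hq1).comp <|
      tendsto_atBot_add_const_right _ _ (tendsto_intCast_atBot_iff.2 tendsto_id)
  obtain ⟨K, hK⟩ := eventually_atBot.1 <|
    ((tendsto_tsum_poleTermBound_atTop hq0 hq1 hε).comp hradius).eventually (ge_mem_nhds hδ)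
  exact ⟨K, fun k hk z hz => (hnorm_tsum k z hz).trans (hz ▸ hK k hk)⟩
end
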